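/- arXiv:2605.13175 — 2 statements merged into one kernel-verified Lean document; each statement's English description precedes it below -/
import Mathlib

section
/- Let π be a probability measure on ℝ^d with finite first moment, i.e., m_1 := ∫ ‖x‖ dπ(x) < ∞, and let T > 0. Then the convolution of π with the Gaussian measure N(0, T I_d) satisfies TV( π * N(0, T I_d), N(0, T I_d) ) ≤ m_1 / (2 √T). In particular the initialization error of the Gaussian diffusion decays at rate T^{−1/2}. -/
open MeasureTheory

/-- Total variation distance between two measures:
`TV(μ, ν) = sup_{A measurable} |μ(A) − ν(A)|`. -/
noncomputable def tvDist {X : Type*} [MeasurableSpace X] (μ ν : Measure X) : ℝ :=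
  ⨆ A : {s : Set X // MeasurableSet s}, |(μ A.1).toReal - (ν A.1).toReal|

/-- Density of the Gaussian distribution `N(m, σ² I_d)` on `ℝ^d`. -/
noncomputable def gaussianPdf (d : ℕ) (m : EuclideanSpace ℝ (Fin d)) (σ : ℝ)
    (x : EuclideanSpace ℝ (Fin d)) : ℝ :=
  (2 * Real.pi * σ ^ 2) ^ (-(d : ℝ) / 2) * Real.exp (-‖x - m‖ ^ 2 / (2 * σ ^ 2))

/-- The Gaussian measure `N(m, σ² I_d)` on `ℝ^d`. -/
noncomputable def gaussianMeasure (d : ℕ) (m : EuclideanSpace ℝ (Fin d)) (σ : ℝ) :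
    Measure (EuclideanSpace ℝ (Fin d)) :=
  volume.withDensity fun x => ENNReal.ofReal (gaussianPdf d m σ x)

namespace GaussianTVAux

open Real Set
open scoped RealInnerProductSpace ENNReal

/-! ### One-dimensional Gaussian facts -/

/-- The one-dimensional Gaussian density. -/
noncomputable def f1 (σ t : ℝ) : ℝ :=
  (Real.sqrt (2 * Real.pi * σ ^ 2))⁻¹ * Real.exp (-t ^ 2 / (2 * σ ^ 2))

lemma f1_nonneg (σ t : ℝ) : 0 ≤ f1 σ t := by
  unfold f1; positivity

lemma f1_eq (σ : ℝ) :
    f1 σ = fun t => (Real.sqrt (2 * Real.pi * σ ^ 2))⁻¹ *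
      Real.exp (-(2 * σ ^ 2)⁻¹ * t ^ 2) := by
  funext t
  unfold f1
  congr 1
  ring_nf

lemma integrable_f1 {σ : ℝ} (hσ : 0 < σ) : Integrable (f1 σ) := by
  have hb : 0 < (2 * σ ^ 2)⁻¹ := by positivity
  rw [f1_eq]
  exact (integrable_exp_neg_mul_sq hb).const_mul _

lemma integral_f1 {σ : ℝ} (hσ : 0 < σ) : ∫ t, f1 σ t = 1 := by
  have hb : 0 < (2 * σ ^ 2)⁻¹ := by positivity
  have ha : (0:ℝ) < 2 * Real.pi * σ ^ 2 := by positivity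
  rw [f1_eq]
  rw [integral_const_mul, integral_gaussian]
  have : Real.pi / (2 * σ ^ 2)⁻¹ = 2 * Real.pi * σ ^ 2 := by
    field_simp
  rw [this]
  exact inv_mul_cancel₀ (Real.sqrt_ne_zero'.mpr ha)

lemma integral_Ioi_mul_exp {b : ℝ} (hb : 0 < b) :
    ∫ t in Ioi (0:ℝ), t * Real.exp (-b * t ^ 2) = (2 * b)⁻¹ := by
  have A : ∀ s : ℝ, HasDerivAt (fun u : ℝ => -(2 * b)⁻¹ * Real.exp (-b * u ^ 2))
      (s * Real.exp (-b * s ^ 2)) s := by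
    intro s
    have h := (((hasDerivAt_pow 2 s).const_mul (-b)).exp).const_mul (-(2 * b)⁻¹)
    refine h.congr_deriv ?_
    have hb' : b ≠ 0 := hb.ne'
    field_simp
    ring
  have B : Filter.Tendsto (fun y : ℝ => -(2 * b)⁻¹ * Real.exp (-b * y ^ 2))
      Filter.atTop (nhds 0) := by
    have h0 : Filter.Tendsto (fun y : ℝ => Real.exp (-b * y ^ 2)) Filter.atTop (nhds 0) := by
      apply Real.tendsto_exp_atBot.comp
      exact (Filter.tendsto_pow_atTop two_ne_zero).const_mul_atTop_of_neg (neg_lt_zero.2 hb)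
    have := h0.const_mul (-(2 * b)⁻¹)
    simpa using this
  have := integral_Ioi_of_hasDerivAt_of_tendsto' (a := (0:ℝ)) (fun x _ => A x)
    ((integrable_mul_exp_neg_mul_sq hb).integrableOn) B
  rw [this]
  simp [Real.exp_zero]

lemma integrable_abs_mul_exp {b : ℝ} (hb : 0 < b) :
    Integrable (fun t : ℝ => |t| * Real.exp (-b * t ^ 2)) := by
  have h := (integrable_mul_exp_neg_mul_sq hb).abs
  refine h.congr (ae_of_all _ fun t => ?_)
  simp [abs_mul, abs_of_pos (Real.exp_pos _)]

lemma integral_abs_mul_exp {b : ℝ} (hb : 0 < b) :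
    ∫ t : ℝ, |t| * Real.exp (-b * t ^ 2) = b⁻¹ := by
  have h : (fun t : ℝ => |t| * Real.exp (-b * t ^ 2))
      = fun t : ℝ => |t| * Real.exp (-b * |t| ^ 2) := by
    funext t; rw [sq_abs]
  rw [h]
  rw [integral_comp_abs (f := fun s : ℝ => s * Real.exp (-b * s ^ 2))]
  rw [integral_Ioi_mul_exp hb]
  field_simp

lemma integrable_abs_f1 {σ : ℝ} (hσ : 0 < σ) : Integrable (fun t => |t| * f1 σ t) := by
  have hb : 0 < (2 * σ ^ 2)⁻¹ := by positivity
  have h := (integrable_abs_mul_exp hb).const_mul (Real.sqrt (2 * Real.pi * σ ^ 2))⁻¹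
  refine h.congr (ae_of_all _ fun t => ?_)
  rw [f1_eq]
  ring

lemma integral_abs_f1_le {σ : ℝ} (hσ : 0 < σ) : ∫ t, |t| * f1 σ t ≤ σ := by
  have hb : 0 < (2 * σ ^ 2)⁻¹ := by positivity
  have ha : (0:ℝ) < 2 * Real.pi * σ ^ 2 := by positivity
  have heq : (fun t : ℝ => |t| * f1 σ t)
      = fun t : ℝ => (Real.sqrt (2 * Real.pi * σ ^ 2))⁻¹ *
        (|t| * Real.exp (-(2 * σ ^ 2)⁻¹ * t ^ 2)) := by
    funext t; rw [f1_eq]; ring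
  rw [heq, integral_const_mul, integral_abs_mul_exp hb, inv_inv]
  -- `(√(2πσ²))⁻¹ * (2σ²) ≤ σ`
  have hs : Real.sqrt (2 * Real.pi * σ ^ 2) = Real.sqrt (2 * Real.pi) * σ := by
    rw [Real.sqrt_mul (by positivity), Real.sqrt_sq hσ.le]
  have h2 : (2:ℝ) ≤ Real.sqrt (2 * Real.pi) := by
    nlinarith [Real.sq_sqrt (show (0:ℝ) ≤ 2 * Real.pi by positivity),
      Real.sqrt_nonneg (2 * Real.pi), Real.pi_gt_three]
  rw [hs, inv_mul_le_iff₀ (by positivity)]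
  nlinarith

/-! ### d-dimensional Gaussian facts -/

variable {d : ℕ} {σ : ℝ}

lemma gaussianPdf_apply (σ : ℝ) (x : EuclideanSpace ℝ (Fin d)) :
    gaussianPdf d 0 σ x
      = (2 * Real.pi * σ ^ 2) ^ (-(d : ℝ) / 2) * Real.exp (-‖x‖ ^ 2 / (2 * σ ^ 2)) := by
  rw [gaussianPdf, sub_zero]

lemma gaussianPdf_nonneg (σ : ℝ) (x : EuclideanSpace ℝ (Fin d)) :
    0 ≤ gaussianPdf d 0 σ x := by
  rw [gaussianPdf_apply]
  positivity

lemma continuous_gaussianPdf : Continuous (gaussianPdf d 0 σ) := by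
  unfold gaussianPdf
  exact continuous_const.mul (Real.continuous_exp.comp
    (((continuous_norm.comp (continuous_id.sub continuous_const)).pow 2).neg.div_const _))

lemma gc_eq (hσ : 0 < σ) :
    ((2 * Real.pi * σ ^ 2 : ℝ) ^ (-(d : ℝ) / 2))
      = ((Real.sqrt (2 * Real.pi * σ ^ 2))⁻¹) ^ d := by
  have ha : (0:ℝ) < 2 * Real.pi * σ ^ 2 := by positivity
  have h1 : (-(d : ℝ) / 2) = (-(1/2) : ℝ) * (d : ℝ) := by ring
  rw [h1, Real.rpow_mul ha.le, Real.rpow_natCast]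
  congr 1
  rw [show (-(1/2) : ℝ) = -(1/2 : ℝ) from rfl, Real.rpow_neg ha.le, Real.sqrt_eq_rpow]

lemma gaussianPdf_comp_symm (hσ : 0 < σ) (y : Fin d → ℝ) :
    gaussianPdf d 0 σ ((MeasurableEquiv.toLp 2 (Fin d → ℝ)) y)
      = ∏ i, f1 σ (y i) := by
  rw [gaussianPdf_apply]
  have hnorm : ‖(MeasurableEquiv.toLp 2 (Fin d → ℝ)) y‖ ^ 2 = ∑ i, (y i) ^ 2 := by
    rw [EuclideanSpace.norm_eq, Real.sq_sqrt (by positivity)]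
    refine Finset.sum_congr rfl fun i _ => ?_
    rw [Real.norm_eq_abs, sq_abs]
    rfl
  rw [hnorm, gc_eq hσ]
  unfold f1
  rw [Finset.prod_mul_distrib, Finset.prod_const, Finset.card_univ, Fintype.card_fin,
    ← Real.exp_sum]
  congr 1
  have hterm : ∑ i, -y i ^ 2 / (2 * σ ^ 2) = ∑ i, -(y i ^ 2 / (2 * σ ^ 2)) :=
    Finset.sum_congr rfl fun i _ => by ring
  rw [hterm, Finset.sum_neg_distrib, ← Finset.sum_div, neg_div]

lemma integrable_gaussianPdf (hσ : 0 < σ) : Integrable (gaussianPdf d 0 σ) := by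
  have e : MeasurePreserving (MeasurableEquiv.toLp 2 (Fin d → ℝ)) :=
    (EuclideanSpace.volume_preserving_symm_measurableEquiv_toLp (Fin d)).symm
  rw [← e.integrable_comp_emb (MeasurableEquiv.measurableEmbedding _)]
  have h : gaussianPdf d 0 σ ∘ ⇑(MeasurableEquiv.toLp 2 (Fin d → ℝ))
      = fun y => ∏ i, f1 σ (y i) := funext fun y => gaussianPdf_comp_symm hσ y
  rw [h]
  exact Integrable.fintype_prod (f := fun _ : Fin d => f1 σ) (fun _ => integrable_f1 hσ)

lemma integral_gaussianPdf (hσ : 0 < σ) : ∫ z, gaussianPdf d 0 σ z = 1 := by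
  have e : MeasurePreserving (MeasurableEquiv.toLp 2 (Fin d → ℝ)) :=
    (EuclideanSpace.volume_preserving_symm_measurableEquiv_toLp (Fin d)).symm
  rw [← e.integral_comp (MeasurableEquiv.measurableEmbedding _) (gaussianPdf d 0 σ)]
  simp_rw [gaussianPdf_comp_symm hσ]
  rw [volume_pi, integral_fintype_prod_eq_prod (fun _ => f1 σ)]
  simp [integral_f1 hσ]

lemma integrable_absK (hσ : 0 < σ) (j₀ : Fin d) :
    Integrable (fun w : EuclideanSpace ℝ (Fin d) => |w j₀| * gaussianPdf d 0 σ w) := by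
  classical
  have e : MeasurePreserving (MeasurableEquiv.toLp 2 (Fin d → ℝ)) :=
    (EuclideanSpace.volume_preserving_symm_measurableEquiv_toLp (Fin d)).symm
  rw [← e.integrable_comp_emb (MeasurableEquiv.measurableEmbedding _)]
  have h : (fun w : EuclideanSpace ℝ (Fin d) => |w j₀| * gaussianPdf d 0 σ w)
      ∘ ⇑(MeasurableEquiv.toLp 2 (Fin d → ℝ))
      = fun y : Fin d → ℝ =>
        ∏ i, (if i = j₀ then fun t => |t| * f1 σ t else f1 σ) (y i) := by
    funext y
    have hprod : ∏ i, (if i = j₀ then fun t => |t| * f1 σ t else f1 σ) (y i)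
        = |y j₀| * ∏ i, f1 σ (y i) := by
      rw [← Finset.mul_prod_erase Finset.univ _ (Finset.mem_univ j₀),
        ← Finset.mul_prod_erase Finset.univ (fun i => f1 σ (y i)) (Finset.mem_univ j₀)]
      rw [if_pos rfl]
      rw [Finset.prod_congr rfl
        (fun i hi => by rw [if_neg (Finset.ne_of_mem_erase hi)])]
      ring
    rw [hprod]
    simp only [Function.comp_apply, gaussianPdf_comp_symm hσ]
    rfl
  rw [h]
  refine Integrable.fintype_prod_dep (fun i => ?_)
  by_cases hi : i = j₀
  · rw [if_pos hi]; exact integrable_abs_f1 hσ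
  · rw [if_neg hi]; exact integrable_f1 hσ

lemma integral_absK_le (hσ : 0 < σ) (j₀ : Fin d) :
    ∫ w : EuclideanSpace ℝ (Fin d), |w j₀| * gaussianPdf d 0 σ w ≤ σ := by
  classical
  have e : MeasurePreserving (MeasurableEquiv.toLp 2 (Fin d → ℝ)) :=
    (EuclideanSpace.volume_preserving_symm_measurableEquiv_toLp (Fin d)).symm
  rw [← e.integral_comp (MeasurableEquiv.measurableEmbedding _)]
  have h : ∀ y : Fin d → ℝ,
      |((MeasurableEquiv.toLp 2 (Fin d → ℝ)) y) j₀|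
        * gaussianPdf d 0 σ ((MeasurableEquiv.toLp 2 (Fin d → ℝ)) y)
      = ∏ i, (if i = j₀ then fun t => |t| * f1 σ t else f1 σ) (y i) := by
    intro y
    have hprod : ∏ i, (if i = j₀ then fun t => |t| * f1 σ t else f1 σ) (y i)
        = |y j₀| * ∏ i, f1 σ (y i) := by
      rw [← Finset.mul_prod_erase Finset.univ _ (Finset.mem_univ j₀),
        ← Finset.mul_prod_erase Finset.univ (fun i => f1 σ (y i)) (Finset.mem_univ j₀)]
      rw [if_pos rfl]
      rw [Finset.prod_congr rfl
        (fun i hi => by rw [if_neg (Finset.ne_of_mem_erase hi)])]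
      ring
    rw [hprod, gaussianPdf_comp_symm hσ]
    rfl
  simp_rw [h]
  rw [volume_pi, integral_fintype_prod_eq_prod (fun i => if i = j₀ then fun t => |t| * f1 σ t else f1 σ)]
  rw [← Finset.mul_prod_erase Finset.univ _ (Finset.mem_univ j₀)]
  have h0 : (if j₀ = j₀ then (fun t => |t| * f1 σ t) else f1 σ) = fun t => |t| * f1 σ t :=
    if_pos rfl
  have h1 : ∏ i ∈ Finset.univ.erase j₀,
      (∫ t, (if i = j₀ then fun t => |t| * f1 σ t else f1 σ) t) = 1 := by
    refine Finset.prod_eq_one fun i hi => ?_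
    have h2 : (if i = j₀ then (fun t => |t| * f1 σ t) else f1 σ) = f1 σ :=
      if_neg (Finset.ne_of_mem_erase hi)
    rw [h2]
    exact integral_f1 hσ
  rw [h0, h1, mul_one]
  exact integral_abs_f1_le hσ

lemma measurable_coord (j₀ : Fin d) :
    Measurable (fun w : EuclideanSpace ℝ (Fin d) => w j₀) := by
  measurability

lemma lintegral_inner_le (hσ : 0 < σ) (x : EuclideanSpace ℝ (Fin d)) :
    ∫⁻ z, ENNReal.ofReal (|⟪z, x⟫| * gaussianPdf d 0 σ z)
      ≤ ENNReal.ofReal (σ * ‖x‖) := by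
  classical
  rcases eq_or_ne x 0 with rfl | hx
  · simp
  have hd : Nonempty (Fin d) := by
    by_contra h
    apply hx
    ext i
    exact absurd ⟨i⟩ h
  obtain j₀ := Classical.arbitrary (Fin d)
  have hxn : ‖x‖ ≠ 0 := norm_ne_zero_iff.mpr hx
  set u : EuclideanSpace ℝ (Fin d) := ‖x‖⁻¹ • x with hu_def
  have hu : ‖u‖ = 1 := by
    rw [hu_def, norm_smul, norm_inv, norm_norm]
    exact inv_mul_cancel₀ hxn
  have horth : Orthonormal ℝ (({j₀} : Set (Fin d)).restrict (fun _ => u)) := by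
    rw [orthonormal_iff_ite]
    intro i j
    have hij : i = j := Subtype.ext (i.2.trans j.2.symm)
    subst hij
    rw [if_pos rfl]
    rw [show ({j₀} : Set (Fin d)).restrict (fun _ => u) i = u from rfl, real_inner_self_eq_norm_sq, hu]
    norm_num
  obtain ⟨b, hb⟩ := horth.exists_orthonormalBasis_extension_of_card_eq
    (by simp [finrank_euclideanSpace_fin])
  have hbj : b j₀ = u := hb j₀ rfl
  have hrepr : ∀ z : EuclideanSpace ℝ (Fin d), ⟪z, x⟫ = ‖x‖ * (b.repr z j₀) := by
    intro z
    have h1 : x = ‖x‖ • u := (smul_inv_smul₀ hxn x).symm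
    have hbx : b.repr x = ‖x‖ • EuclideanSpace.single j₀ 1 := by
      conv_lhs => rw [h1]
      rw [LinearIsometryEquiv.map_smul, ← hbj, b.repr_self]
    calc ⟪z, x⟫ = ⟪b.repr z, b.repr x⟫ := (b.repr.inner_map_map z x).symm
    _ = ‖x‖ * (b.repr z j₀) := by
        rw [hbx, real_inner_smul_right, EuclideanSpace.inner_single_right]
        simp
  have hg : ∀ z : EuclideanSpace ℝ (Fin d),
      gaussianPdf d 0 σ (b.repr z) = gaussianPdf d 0 σ z := by
    intro z
    rw [gaussianPdf_apply, gaussianPdf_apply, LinearIsometryEquiv.norm_map]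
  set Ψ : EuclideanSpace ℝ (Fin d) → ℝ≥0∞ :=
    fun w => ENNReal.ofReal (‖x‖ * (|w j₀| * gaussianPdf d 0 σ w)) with hΨdef
  have hΨmeas : Measurable Ψ := by
    exact (((measurable_coord j₀).abs.mul
      continuous_gaussianPdf.measurable).const_mul _).ennreal_ofReal
  have key : ∀ z, ENNReal.ofReal (|⟪z, x⟫| * gaussianPdf d 0 σ z) = Ψ (b.repr z) := by
    intro z
    show ENNReal.ofReal (|⟪z, x⟫| * gaussianPdf d 0 σ z)
      = ENNReal.ofReal (‖x‖ * (|b.repr z j₀| * gaussianPdf d 0 σ (b.repr z)))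
    rw [hg, hrepr, abs_mul, abs_norm, mul_assoc]
  calc ∫⁻ z, ENNReal.ofReal (|⟪z, x⟫| * gaussianPdf d 0 σ z)
      = ∫⁻ z, Ψ (b.repr z) := by simp_rw [key]
  _ = ∫⁻ w, Ψ w := b.measurePreserving_repr.lintegral_comp hΨmeas
  _ = ENNReal.ofReal ‖x‖ * ∫⁻ w, ENNReal.ofReal (|w j₀| * gaussianPdf d 0 σ w) := by
      rw [hΨdef]
      simp_rw [ENNReal.ofReal_mul (norm_nonneg x)]
      rw [lintegral_const_mul (f := fun w => ENNReal.ofReal (|w j₀| * gaussianPdf d 0 σ w)) _ (((measurable_coord j₀).abs.mul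
        continuous_gaussianPdf.measurable).ennreal_ofReal)]
  _ = ENNReal.ofReal ‖x‖ * ENNReal.ofReal (∫ w, |w j₀| * gaussianPdf d 0 σ w) := by
      rw [ofReal_integral_eq_lintegral_ofReal (integrable_absK hσ j₀)
        (ae_of_all _ fun w => mul_nonneg (abs_nonneg _) (gaussianPdf_nonneg σ w))]
  _ ≤ ENNReal.ofReal ‖x‖ * ENNReal.ofReal σ :=
      mul_le_mul_right (ENNReal.ofReal_le_ofReal (integral_absK_le hσ j₀)) _
  _ = ENNReal.ofReal (σ * ‖x‖) := by
      rw [← ENNReal.ofReal_mul (norm_nonneg x), mul_comm]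

lemma abs_sub_gaussianPdf_le (hσ : 0 < σ) (x z : EuclideanSpace ℝ (Fin d)) :
    |gaussianPdf d 0 σ (z - x) - gaussianPdf d 0 σ z|
      ≤ ∫ t in (0:ℝ)..1, |⟪z - t • x, x⟫| / σ ^ 2 * gaussianPdf d 0 σ (z - t • x) := by
  set C := ((2 * Real.pi * σ ^ 2 : ℝ)) ^ (-(d : ℝ) / 2) with hC
  set A := ⟪z, x⟫ with hA
  set B := ‖x‖ ^ 2 with hB
  have hq : ∀ t : ℝ, ‖z - t • x‖ ^ 2 = ‖z‖ ^ 2 - 2 * t * A + t ^ 2 * B := by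
    intro t
    rw [norm_sub_sq_real, real_inner_smul_right, norm_smul]
    rw [mul_pow, Real.norm_eq_abs, sq_abs]
    ring
  have hform : ∀ t : ℝ, gaussianPdf d 0 σ (z - t • x)
      = C * Real.exp (-(‖z‖ ^ 2 - 2 * t * A + t ^ 2 * B) / (2 * σ ^ 2)) := by
    intro t
    rw [gaussianPdf_apply, hq]
  have hderiv : ∀ t : ℝ, HasDerivAt (fun s : ℝ => gaussianPdf d 0 σ (z - s • x))
      ((A - t * B) / σ ^ 2 * gaussianPdf d 0 σ (z - t • x)) t := by
    intro t
    have i1 : HasDerivAt (fun s : ℝ => 2 * s * A) (2 * A) t := by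
      simpa using ((hasDerivAt_id t).const_mul 2).mul_const A
    have i2 : HasDerivAt (fun s : ℝ => s ^ 2 * B) (2 * t * B) t := by
      simpa using (hasDerivAt_pow 2 t).mul_const B
    have h1 : HasDerivAt (fun s : ℝ => ‖z‖ ^ 2 - 2 * s * A + s ^ 2 * B)
        (-(2 * A) + 2 * t * B) t := by
      have h := ((hasDerivAt_const t (‖z‖ ^ 2)).sub i1).add i2
      refine h.congr_deriv ?_
      ring
    have h2 : HasDerivAt (fun s : ℝ => -(‖z‖ ^ 2 - 2 * s * A + s ^ 2 * B) / (2 * σ ^ 2))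
        ((2 * A - 2 * t * B) / (2 * σ ^ 2)) t := by
      have h := (h1.neg).div_const (2 * σ ^ 2)
      refine h.congr_deriv ?_
      ring
    have h3 := (h2.exp).const_mul C
    have heq : (fun s : ℝ => gaussianPdf d 0 σ (z - s • x))
        = fun s : ℝ => C * Real.exp (-(‖z‖ ^ 2 - 2 * s * A + s ^ 2 * B) / (2 * σ ^ 2)) :=
      funext hform
    rw [heq, hform]
    refine h3.congr_deriv ?_
    field_simp
  have hzc : Continuous fun t : ℝ => z - t • x :=
    continuous_const.sub (continuous_id.smul continuous_const)
  have hcont : Continuous fun t : ℝ =>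
      (A - t * B) / σ ^ 2 * gaussianPdf d 0 σ (z - t • x) := by
    exact ((continuous_const.sub (continuous_id.mul continuous_const)).div_const _).mul
      (continuous_gaussianPdf.comp hzc)
  have hFTC := intervalIntegral.integral_eq_sub_of_hasDerivAt
    (f := fun s : ℝ => gaussianPdf d 0 σ (z - s • x))
    (f' := fun t : ℝ => (A - t * B) / σ ^ 2 * gaussianPdf d 0 σ (z - t • x))
    (fun t _ => hderiv t) (hcont.intervalIntegrable 0 1)
  have h10 : gaussianPdf d 0 σ (z - (1:ℝ) • x) = gaussianPdf d 0 σ (z - x) := by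
    rw [one_smul]
  have h00 : gaussianPdf d 0 σ (z - (0:ℝ) • x) = gaussianPdf d 0 σ z := by
    rw [zero_smul, sub_zero]
  have habs : |gaussianPdf d 0 σ (z - x) - gaussianPdf d 0 σ z|
      ≤ ∫ t in (0:ℝ)..1, |(A - t * B) / σ ^ 2 * gaussianPdf d 0 σ (z - t • x)| := by
    rw [← h10, ← h00, ← hFTC]
    have := intervalIntegral.norm_integral_le_integral_norm
      (f := fun t : ℝ => (A - t * B) / σ ^ 2 * gaussianPdf d 0 σ (z - t • x))
      (μ := volume) (zero_le_one)
    simpa only [Real.norm_eq_abs] using this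
  refine habs.trans_eq ?_
  apply intervalIntegral.integral_congr
  intro t _
  have hi : ⟪z - t • x, x⟫ = A - t * B := by
    rw [inner_sub_left, real_inner_smul_left, real_inner_self_eq_norm_sq]
  show |(A - t * B) / σ ^ 2 * gaussianPdf d 0 σ (z - t • x)|
      = |⟪z - t • x, x⟫| / σ ^ 2 * gaussianPdf d 0 σ (z - t • x)
  rw [hi, abs_mul, abs_div, abs_of_nonneg (gaussianPdf_nonneg σ _), abs_of_nonneg (sq_nonneg σ)]

set_option maxHeartbeats 2000000 in
lemma lintegral_abs_sub_le (hσ : 0 < σ) (x : EuclideanSpace ℝ (Fin d)) :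
    ∫⁻ z, ENNReal.ofReal |gaussianPdf d 0 σ (z - x) - gaussianPdf d 0 σ z|
      ≤ ENNReal.ofReal (‖x‖ / σ) := by
  have hgc : Continuous (gaussianPdf d 0 σ) := continuous_gaussianPdf
  have hsubc : Continuous fun p : EuclideanSpace ℝ (Fin d) × ℝ => p.1 - p.2 • x :=
    continuous_fst.sub (continuous_snd.smul continuous_const)
  have hφc : Continuous fun p : EuclideanSpace ℝ (Fin d) × ℝ =>
      |⟪p.1 - p.2 • x, x⟫| / σ ^ 2 * gaussianPdf d 0 σ (p.1 - p.2 • x) :=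
    ((hsubc.inner continuous_const).abs.div_const _).mul (hgc.comp hsubc)
  have step1 : ∀ z : EuclideanSpace ℝ (Fin d),
      ENNReal.ofReal |gaussianPdf d 0 σ (z - x) - gaussianPdf d 0 σ z|
        ≤ ∫⁻ t in Ioc (0:ℝ) 1,
            ENNReal.ofReal (|⟪z - t • x, x⟫| / σ ^ 2 * gaussianPdf d 0 σ (z - t • x)) := by
    intro z
    have h1 := abs_sub_gaussianPdf_le hσ x z
    have h2 : (∫ t in (0:ℝ)..1, |⟪z - t • x, x⟫| / σ ^ 2 * gaussianPdf d 0 σ (z - t • x))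
        = ∫ t in Ioc (0:ℝ) 1, |⟪z - t • x, x⟫| / σ ^ 2 * gaussianPdf d 0 σ (z - t • x) :=
      intervalIntegral.integral_of_le zero_le_one
    have h1c : Continuous fun t : ℝ => z - t • x :=
      continuous_const.sub (continuous_id.smul continuous_const)
    have hφtc : Continuous fun t : ℝ =>
        |⟪z - t • x, x⟫| / σ ^ 2 * gaussianPdf d 0 σ (z - t • x) :=
      ((h1c.inner continuous_const).abs.div_const _).mul
        ((continuous_gaussianPdf (d := d) (σ := σ)).comp h1c)
    have h3 : IntegrableOn
        (fun t => |⟪z - t • x, x⟫| / σ ^ 2 * gaussianPdf d 0 σ (z - t • x))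
        (Ioc (0:ℝ) 1) := hφtc.integrableOn_Ioc
    calc ENNReal.ofReal |gaussianPdf d 0 σ (z - x) - gaussianPdf d 0 σ z|
        ≤ ENNReal.ofReal
            (∫ t in Ioc (0:ℝ) 1, |⟪z - t • x, x⟫| / σ ^ 2 * gaussianPdf d 0 σ (z - t • x)) :=
          ENNReal.ofReal_le_ofReal (h1.trans_eq h2)
    _ = ∫⁻ t in Ioc (0:ℝ) 1,
          ENNReal.ofReal (|⟪z - t • x, x⟫| / σ ^ 2 * gaussianPdf d 0 σ (z - t • x)) :=
        ofReal_integral_eq_lintegral_ofReal h3 (ae_of_all _ fun t =>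
          mul_nonneg (div_nonneg (abs_nonneg _) (sq_nonneg σ)) (gaussianPdf_nonneg σ _))
  have hinner : ∀ t : ℝ,
      ∫⁻ z, ENNReal.ofReal (|⟪z - t • x, x⟫| / σ ^ 2 * gaussianPdf d 0 σ (z - t • x))
        ≤ ENNReal.ofReal (‖x‖ / σ) := by
    intro t
    have htr : ∫⁻ z, ENNReal.ofReal (|⟪z - t • x, x⟫| / σ ^ 2 * gaussianPdf d 0 σ (z - t • x))
        = ∫⁻ z, ENNReal.ofReal (|⟪z, x⟫| / σ ^ 2 * gaussianPdf d 0 σ z) :=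
      lintegral_sub_right_eq_self
        (fun z => ENNReal.ofReal (|⟪z, x⟫| / σ ^ 2 * gaussianPdf d 0 σ z)) (t • x)
    rw [htr]
    have hψ : ∀ z : EuclideanSpace ℝ (Fin d),
        |⟪z, x⟫| / σ ^ 2 * gaussianPdf d 0 σ z
          = (1 / σ ^ 2) * (|⟪z, x⟫| * gaussianPdf d 0 σ z) := by
      intro z; ring
    simp_rw [hψ, ENNReal.ofReal_mul (by positivity : (0:ℝ) ≤ 1 / σ ^ 2)]
    have hfm : Measurable fun z : EuclideanSpace ℝ (Fin d) =>
        ENNReal.ofReal (|⟪z, x⟫| * gaussianPdf d 0 σ z) := by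
      exact (((continuous_id.inner continuous_const).abs.mul hgc).measurable).ennreal_ofReal
    rw [lintegral_const_mul _ hfm]
    calc ENNReal.ofReal (1 / σ ^ 2) * ∫⁻ z, ENNReal.ofReal (|⟪z, x⟫| * gaussianPdf d 0 σ z)
        ≤ ENNReal.ofReal (1 / σ ^ 2) * ENNReal.ofReal (σ * ‖x‖) :=
          mul_le_mul_right (lintegral_inner_le hσ x) _
    _ = ENNReal.ofReal (‖x‖ / σ) := by
        rw [← ENNReal.ofReal_mul (by positivity : (0:ℝ) ≤ 1 / σ ^ 2)]
        congr 1
        field_simp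
  calc ∫⁻ z, ENNReal.ofReal |gaussianPdf d 0 σ (z - x) - gaussianPdf d 0 σ z|
      ≤ ∫⁻ z, ∫⁻ t in Ioc (0:ℝ) 1,
          ENNReal.ofReal (|⟪z - t • x, x⟫| / σ ^ 2 * gaussianPdf d 0 σ (z - t • x)) :=
        lintegral_mono step1
  _ = ∫⁻ t in Ioc (0:ℝ) 1, ∫⁻ z,
        ENNReal.ofReal (|⟪z - t • x, x⟫| / σ ^ 2 * gaussianPdf d 0 σ (z - t • x)) := by
      apply lintegral_lintegral_swap
      exact (hφc.measurable.ennreal_ofReal).aemeasurable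
  _ ≤ ∫⁻ _ in Ioc (0:ℝ) 1, ENNReal.ofReal (‖x‖ / σ) := lintegral_mono (fun t => hinner t)
  _ = ENNReal.ofReal (‖x‖ / σ) := by
      rw [setLIntegral_const, Real.volume_Ioc]
      norm_num

lemma integrable_shift (hσ : 0 < σ) (x : EuclideanSpace ℝ (Fin d)) :
    Integrable (fun z => gaussianPdf d 0 σ (z - x)) := by
  have h := ((measurePreserving_sub_right
    (volume : Measure (EuclideanSpace ℝ (Fin d))) x).integrable_comp_emb
    (MeasurableEquiv.subRight x).measurableEmbedding
    (g := gaussianPdf d 0 σ)).mpr (integrable_gaussianPdf hσ)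
  exact h

lemma integral_shift (hσ : 0 < σ) (x : EuclideanSpace ℝ (Fin d)) :
    ∫ z, gaussianPdf d 0 σ (z - x) = 1 := by
  rw [(measurePreserving_sub_right (volume : Measure (EuclideanSpace ℝ (Fin d))) x).integral_comp
    (MeasurableEquiv.subRight x).measurableEmbedding (gaussianPdf d 0 σ)]
  exact integral_gaussianPdf hσ

lemma integral_abs_sub_le (hσ : 0 < σ) (x : EuclideanSpace ℝ (Fin d)) :
    ∫ z, |gaussianPdf d 0 σ (z - x) - gaussianPdf d 0 σ z| ≤ ‖x‖ / σ := by
  have hint : Integrable (fun z => gaussianPdf d 0 σ (z - x) - gaussianPdf d 0 σ z) :=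
    (integrable_shift hσ x).sub (integrable_gaussianPdf hσ)
  rw [integral_eq_lintegral_of_nonneg_ae (ae_of_all _ fun z => abs_nonneg _)
    hint.abs.aestronglyMeasurable]
  exact ENNReal.toReal_le_of_le_ofReal (by positivity) (lintegral_abs_sub_le hσ x)

lemma abs_setIntegral_le_half {α : Type*} [MeasurableSpace α] {μ : Measure α} {h : α → ℝ}
    (hint : Integrable h μ) (hzero : ∫ a, h a ∂μ = 0) (A : Set α) :
    |∫ a in A, h a ∂μ| ≤ (∫ a, |h a| ∂μ) / 2 := by
  have hpos : Integrable (fun a => max (h a) 0) μ := hint.pos_part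
  have hneg : Integrable (fun a => max (-h a) 0) μ := hint.neg.pos_part
  have hPN : ∫ a, max (h a) 0 ∂μ - ∫ a, max (-h a) 0 ∂μ = 0 := by
    rw [← integral_sub hpos hneg]
    simp_rw [max_zero_sub_max_neg_zero_eq_self]
    exact hzero
  have hPN2 : ∫ a, max (h a) 0 ∂μ + ∫ a, max (-h a) 0 ∂μ = ∫ a, |h a| ∂μ := by
    rw [← integral_add hpos hneg]
    congr 1
    funext a
    exact max_zero_add_max_neg_zero_eq_abs_self (h a)
  have hm1 : ∫ a in A, h a ∂μ ≤ ∫ a in A, max (h a) 0 ∂μ :=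
    integral_mono hint.integrableOn hpos.integrableOn (fun a => le_max_left _ _)
  have hm2 : ∫ a in A, max (h a) 0 ∂μ ≤ ∫ a, max (h a) 0 ∂μ :=
    setIntegral_le_integral hpos (ae_of_all _ fun a => le_max_right _ _)
  have hm3 : ∫ a in A, -h a ∂μ ≤ ∫ a in A, max (-h a) 0 ∂μ :=
    integral_mono hint.neg.integrableOn hneg.integrableOn (fun a => le_max_left _ _)
  have hm4 : ∫ a in A, max (-h a) 0 ∂μ ≤ ∫ a, max (-h a) 0 ∂μ :=
    setIntegral_le_integral hneg (ae_of_all _ fun a => le_max_right _ _)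
  have hm5 : ∫ a in A, -h a ∂μ = -∫ a in A, h a ∂μ := integral_neg h
  rw [abs_le]
  constructor
  · linarith
  · linarith

end GaussianTVAux

/-- **Initialization error of the Gaussian diffusion decays at rate `T^{-1/2}`.**
If `π` is a probability measure on `ℝ^d` with finite first moment
`m₁ = ∫ ‖x‖ dπ(x) < ∞` and `T > 0`, then
`TV(π * N(0, T I_d), N(0, T I_d)) ≤ m₁ / (2 √T)`. -/
theorem tvDist_conv_gaussian_le
    (d : ℕ) (π : Measure (EuclideanSpace ℝ (Fin d))) [IsProbabilityMeasure π]
    (hm : Integrable (fun x => ‖x‖) π)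
    (m₁ : ℝ) (hm₁ : m₁ = ∫ x, ‖x‖ ∂π)
    (T : ℝ) (hT : 0 < T) :
    tvDist (π.conv (gaussianMeasure d 0 (Real.sqrt T)))
        (gaussianMeasure d 0 (Real.sqrt T)) ≤
      m₁ / (2 * Real.sqrt T) := by
  classical
  set σ : ℝ := Real.sqrt T with hσdef
  have hσ : 0 < σ := Real.sqrt_pos.mpr hT
  set g : EuclideanSpace ℝ (Fin d) → ℝ := gaussianPdf d 0 σ with hgdef
  set ν : Measure (EuclideanSpace ℝ (Fin d)) := gaussianMeasure d 0 σ with hνdef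
  have hgi : Integrable g := GaussianTVAux.integrable_gaussianPdf hσ
  have hgint : ∫ z, g z = 1 := GaussianTVAux.integral_gaussianPdf hσ
  have hgnn : ∀ z, 0 ≤ g z := fun z => GaussianTVAux.gaussianPdf_nonneg σ z
  have hνapp : ∀ {B : Set (EuclideanSpace ℝ (Fin d))}, MeasurableSet B →
      ν B = ∫⁻ z in B, ENNReal.ofReal (g z) ∂volume := by
    intro B hB
    rw [hνdef, gaussianMeasure, withDensity_apply _ hB]
  have hνuniv : ν Set.univ = 1 := by
    rw [hνapp MeasurableSet.univ, Measure.restrict_univ,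
      ← ofReal_integral_eq_lintegral_ofReal hgi (ae_of_all _ hgnn), hgint]
    simp
  haveI : IsProbabilityMeasure ν := ⟨hνuniv⟩
  -- the shifted mass of a set
  set F : EuclideanSpace ℝ (Fin d) → Set (EuclideanSpace ℝ (Fin d)) → ENNReal :=
    fun x A => ∫⁻ z in A, ENNReal.ofReal (g (z - x)) ∂volume with hFdef
  haveI : Nonempty {s : Set (EuclideanSpace ℝ (Fin d)) // MeasurableSet s} :=
    ⟨⟨∅, MeasurableSet.empty⟩⟩
  rw [tvDist]
  apply ciSup_le
  rintro ⟨A, hA⟩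
  simp only
  set s : Set (EuclideanSpace ℝ (Fin d) × EuclideanSpace ℝ (Fin d)) :=
    (fun p : EuclideanSpace ℝ (Fin d) × EuclideanSpace ℝ (Fin d) => p.1 + p.2) ⁻¹' A with hsdef
  have hs : MeasurableSet s := (measurable_fst.add measurable_snd) hA
  have hconv : (π.conv ν) A = ∫⁻ x, ν (Prod.mk x ⁻¹' s) ∂π := by
    rw [show π.conv ν = Measure.map
      (fun p : EuclideanSpace ℝ (Fin d) × EuclideanSpace ℝ (Fin d) => p.1 + p.2)
      (π.prod ν) from rfl]
    rw [Measure.map_apply (f := fun p : EuclideanSpace ℝ (Fin d) × EuclideanSpace ℝ (Fin d) => p.1 + p.2) (measurable_fst.add measurable_snd) hA, Measure.prod_apply hs]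
  have hνx : ∀ x, ν (Prod.mk x ⁻¹' s) = F x A := by
    intro x
    have hpre : Prod.mk x ⁻¹' s = {y | x + y ∈ A} := rfl
    have hmeasB : MeasurableSet {y : EuclideanSpace ℝ (Fin d) | x + y ∈ A} :=
      (measurable_const_add x) hA
    rw [hpre, hνapp hmeasB]
    simp only [hFdef]
    rw [← lintegral_indicator hmeasB, ← lintegral_indicator hA]
    rw [← lintegral_add_left_eq_self
      (fun z => A.indicator (fun z' => ENNReal.ofReal (g (z' - x))) z) x]
    congr 1
    funext y
    by_cases hy : x + y ∈ A
    · rw [Set.indicator_of_mem hy, Set.indicator_of_mem (by exact hy : y ∈ {y | x + y ∈ A})]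
      rw [add_sub_cancel_left]
    · rw [Set.indicator_of_notMem hy,
        Set.indicator_of_notMem (by exact hy : y ∉ {y | x + y ∈ A})]
  have hFle : ∀ x, F x A ≤ 1 := by
    intro x
    calc F x A ≤ ∫⁻ z, ENNReal.ofReal (g (z - x)) ∂volume := setLIntegral_le_lintegral _ _
    _ = ∫⁻ z, ENNReal.ofReal (g z) ∂volume :=
        lintegral_sub_right_eq_self (fun z => ENNReal.ofReal (g z)) x
    _ = 1 := by
        rw [← ofReal_integral_eq_lintegral_ofReal hgi (ae_of_all _ hgnn), hgint]
        simp
  set c : ℝ := (ν A).toReal with hcdef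
  have hshift : ∀ x : EuclideanSpace ℝ (Fin d), Integrable (fun z => g (z - x)) := by
    intro x
    exact GaussianTVAux.integrable_shift hσ x
  have hcF : ∀ x, (F x A).toReal = ∫ z in A, g (z - x) := by
    intro x
    simp only [hFdef]
    rw [← ofReal_integral_eq_lintegral_ofReal ((hshift x).integrableOn)
      (ae_of_all _ fun z => hgnn _)]
    exact ENNReal.toReal_ofReal (setIntegral_nonneg hA fun z _ => hgnn _)
  have hcA : c = ∫ z in A, g z := by
    rw [hcdef, hνapp hA]
    rw [← ofReal_integral_eq_lintegral_ofReal hgi.integrableOn (ae_of_all _ fun z => hgnn _)]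
    exact ENNReal.toReal_ofReal (setIntegral_nonneg hA fun z _ => hgnn _)
  have key : ∀ x, |(F x A).toReal - c| ≤ ‖x‖ / (2 * σ) := by
    intro x
    rw [hcF, hcA]
    have hsubint : Integrable (fun z => g (z - x) - g z) := (hshift x).sub hgi
    have hsub : (∫ z in A, g (z - x)) - ∫ z in A, g z
        = ∫ z in A, (g (z - x) - g z) :=
      (integral_sub ((hshift x).integrableOn) hgi.integrableOn).symm
    rw [hsub]
    have hshiftint : ∫ z, g (z - x) = 1 := GaussianTVAux.integral_shift hσ x
    have h0 : ∫ z, (g (z - x) - g z) = 0 := by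
      rw [integral_sub (hshift x) hgi, hshiftint, hgint]
      ring
    have hhalf := GaussianTVAux.abs_setIntegral_le_half hsubint h0 A
    have hL1 : ∫ z, |g (z - x) - g z| ≤ ‖x‖ / σ := GaussianTVAux.integral_abs_sub_le hσ x
    calc |∫ z in A, (g (z - x) - g z)| ≤ (∫ z, |g (z - x) - g z|) / 2 := hhalf
    _ ≤ (‖x‖ / σ) / 2 := by linarith
    _ = ‖x‖ / (2 * σ) := by ring
  have hmeasF : Measurable fun x => ν (Prod.mk x ⁻¹' s) := measurable_measure_prodMk_left hs
  have haemeas : AEMeasurable (fun x => F x A) π := by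
    have heq : (fun x => ν (Prod.mk x ⁻¹' s)) = fun x => F x A := funext hνx
    exact heq ▸ hmeasF.aemeasurable
  have htoReal : ((π.conv ν) A).toReal = ∫ x, (F x A).toReal ∂π := by
    rw [hconv]
    have : ∫⁻ x, ν (Prod.mk x ⁻¹' s) ∂π = ∫⁻ x, F x A ∂π := lintegral_congr hνx
    rw [this, ← integral_toReal haemeas
      (ae_of_all _ fun x => lt_of_le_of_lt (hFle x) ENNReal.one_lt_top)]
  have hmeas2 : AEStronglyMeasurable (fun x => (F x A).toReal - c) π :=
    ((haemeas.ennreal_toReal).sub aemeasurable_const).aestronglyMeasurable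
  have hbound : Integrable (fun x : EuclideanSpace ℝ (Fin d) => ‖x‖ / (2 * σ)) π :=
    hm.div_const _
  have hint2 : Integrable (fun x => (F x A).toReal - c) π := by
    refine Integrable.mono' hbound hmeas2 (ae_of_all _ fun x => ?_)
    rw [Real.norm_eq_abs]
    exact key x
  have habs : |∫ x, ((F x A).toReal - c) ∂π| ≤ ∫ x, ‖x‖ / (2 * σ) ∂π := by
    calc |∫ x, ((F x A).toReal - c) ∂π| ≤ ∫ x, |(F x A).toReal - c| ∂π := by
          simpa [Real.norm_eq_abs] using norm_integral_le_integral_norm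
            (f := fun x => (F x A).toReal - c) (μ := π)
    _ ≤ ∫ x, ‖x‖ / (2 * σ) ∂π :=
        integral_mono hint2.abs hbound (fun x => key x)
  have hFint : Integrable (fun x => (F x A).toReal) π :=
    (hint2.add (integrable_const c)).congr (ae_of_all _ fun x => by simp)
  have hsplit : ∫ x, ((F x A).toReal - c) ∂π = ((π.conv ν) A).toReal - (ν A).toReal := by
    rw [integral_sub hFint (integrable_const c), integral_const, probReal_univ, one_smul, htoReal, hcdef]
  have hfinal : |((π.conv ν) A).toReal - (ν A).toReal| ≤ m₁ / (2 * σ) := by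
    rw [← hsplit]
    refine habs.trans ?_
    rw [integral_div, hm₁]
  exact hfinal
end

section
/- Let X be an ℝ^d-valued random vector whose norm has polynomial tail of index γ > 0 in the sense that lim_{r→∞} r^γ · P(‖X‖ > r) = 1, let Z be a standard Gaussian vector on ℝ^d independent of X, and let t > 0. Then the Gaussian-smoothed vector X_t = X + √t · Z has the same tail behavior: lim_{r→∞} r^γ · P(‖X_t‖ > r) = 1. -/
/-!
The standard Gaussian tail is at most `2 ^ (d / 2) * exp (-s ^ 2 / 4)` (Chernoff bound against
`exp (‖x‖² / 4)`), so `r ^ γ * P(‖√t Z‖ > b r) → 0` at every scale `b > 0`. By the triangle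
inequality, for `c' < 1 < c`,
`P(‖X‖ > c r) - P(‖√t Z‖ > (c - 1) r) ≤ P(‖X + √t Z‖ > r) ≤ P(‖X‖ > c' r) + P(‖√t Z‖ > (1 - c') r)`,
and `r ^ γ * P(‖X‖ > c r) → c ^ (-γ)`; letting `c, c' → 1` gives the limit.
-/

open MeasureTheory ProbabilityTheory Filter

open Real Topology

lemma gaussianMeasure_real_norm_gt_le (d : ℕ) {s : ℝ} (hs : 0 ≤ s) :
    (gaussianMeasure d 0 1).real {x | s < ‖x‖} ≤ 2 ^ ((d : ℝ) / 2) * exp (-s ^ 2 / 4) := by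
  set g : EuclideanSpace ℝ (Fin d) → ℝ :=
    fun x => (2 * π) ^ (-(d : ℝ) / 2) * exp (-4⁻¹ * ‖x‖ ^ 2)
  have hg : Integrable g := by
    refine (Integrable.of_integral_ne_zero ?_).const_mul _
    rw [GaussianFourier.integral_rexp_neg_mul_sq_norm (by norm_num)]
    positivity
  have hS : MeasurableSet {x : EuclideanSpace ℝ (Fin d) | s < ‖x‖} :=
    measurableSet_lt measurable_const measurable_norm
  -- On `{s < ‖x‖}`, split `exp (-‖x‖²/2)` into two factors `exp (-‖x‖²/4)` and bound one by
  -- `exp (-s²/4)`.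
  have hpdf : ∀ x ∈ {x : EuclideanSpace ℝ (Fin d) | s < ‖x‖},
      ENNReal.ofReal (gaussianPdf d 0 1 x) ≤ ENNReal.ofReal (exp (-s ^ 2 / 4) * g x) := by
    intro x hx
    have hsx : s ^ 2 ≤ ‖x‖ ^ 2 := pow_le_pow_left₀ hs (le_of_lt hx) 2
    refine ENNReal.ofReal_le_ofReal ?_
    simp only [gaussianPdf, g, sub_zero, one_pow, mul_one, mul_left_comm (exp _), ← exp_add]
    gcongr
    linarith
  have hint : ∫ x, exp (-s ^ 2 / 4) * g x = 2 ^ ((d : ℝ) / 2) * exp (-s ^ 2 / 4) := by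
    have h2π : (2 * π) ^ (-(d : ℝ) / 2) * (π / 4⁻¹) ^ ((d : ℝ) / 2) = 2 ^ ((d : ℝ) / 2) := by
      rw [show π / 4⁻¹ = 2 * (2 * π) by ring,
        mul_rpow (x := 2) (y := 2 * π) (by norm_num) (by positivity), neg_div,
        rpow_neg (by positivity)]
      field_simp
    rw [integral_const_mul, integral_const_mul, GaussianFourier.integral_rexp_neg_mul_sq_norm
      (by norm_num), finrank_euclideanSpace_fin, h2π, mul_comm]
  refine ENNReal.toReal_le_of_le_ofReal (by positivity) ?_
  calc gaussianMeasure d 0 1 {x | s < ‖x‖}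
      = ∫⁻ x in {x | s < ‖x‖}, ENNReal.ofReal (gaussianPdf d 0 1 x) := withDensity_apply _ hS
    _ ≤ ∫⁻ x in {x | s < ‖x‖}, ENNReal.ofReal (exp (-s ^ 2 / 4) * g x) :=
      setLIntegral_mono' hS hpdf
    _ ≤ ∫⁻ x, ENNReal.ofReal (exp (-s ^ 2 / 4) * g x) := setLIntegral_le_lintegral _ _
    _ = ENNReal.ofReal (2 ^ ((d : ℝ) / 2) * exp (-s ^ 2 / 4)) := by
      rw [← hint, ofReal_integral_eq_lintegral_ofReal (hg.const_mul _)
        (ae_of_all _ fun x => by positivity)]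

lemma tendsto_rpow_mul_gaussianMeasure_real_norm_gt (d : ℕ) (γ : ℝ) {a : ℝ} (ha : 0 < a) :
    Tendsto (fun r => r ^ γ * (gaussianMeasure d 0 1).real {x | a * r < ‖x‖}) atTop (𝓝 0) := by
  have hdecay := (tendsto_rpow_mul_exp_neg_mul_atTop_nhds_zero γ (a ^ 2 / 4)
    (by positivity)).const_mul (2 ^ ((d : ℝ) / 2))
  rw [mul_zero] at hdecay
  refine tendsto_of_tendsto_of_tendsto_of_le_of_le' tendsto_const_nhds hdecay ?_ ?_
  · filter_upwards [eventually_ge_atTop 0] with r hr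
    positivity
  · filter_upwards [eventually_ge_atTop 1] with r hr
    have hexp : exp (-(a * r) ^ 2 / 4) ≤ exp (-(a ^ 2 / 4) * r) := by
      gcongr
      nlinarith [sq_nonneg a]
    calc r ^ γ * (gaussianMeasure d 0 1).real {x | a * r < ‖x‖}
        ≤ r ^ γ * (2 ^ ((d : ℝ) / 2) * exp (-(a * r) ^ 2 / 4)) := by
          gcongr
          exact gaussianMeasure_real_norm_gt_le d (by positivity)
      _ ≤ 2 ^ ((d : ℝ) / 2) * (r ^ γ * exp (-(a ^ 2 / 4) * r)) := by
          rw [mul_left_comm]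
          gcongr

lemma tendsto_rpow_mul_comp_const_mul {f : ℝ → ℝ} {γ L c : ℝ}
    (hf : Tendsto (fun r => r ^ γ * f r) atTop (𝓝 L)) (hc : 0 < c) :
    Tendsto (fun r => r ^ γ * f (c * r)) atTop (𝓝 (c ^ (-γ) * L)) := by
  refine ((hf.comp (tendsto_id.const_mul_atTop hc)).const_mul (c ^ (-γ))).congr' ?_
  filter_upwards [eventually_ge_atTop 0] with r hr
  simp only [Function.comp_apply, id, mul_rpow hc.le hr, rpow_neg hc.le]
  field_simp

section NormTail

variable {Ω E : Type*} [MeasurableSpace Ω] [SeminormedAddCommGroup E] (μ : Measure Ω)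
  [IsFiniteMeasure μ]

lemma measureReal_norm_add_gt_le (X Y : Ω → E) {a b r : ℝ} (h : a + b ≤ r) :
    μ.real {ω | r < ‖X ω + Y ω‖} ≤ μ.real {ω | a < ‖X ω‖} + μ.real {ω | b < ‖Y ω‖} := by
  refine (measureReal_mono fun ω hω => ?_).trans (measureReal_union_le _ _)
  by_contra hω'
  simp only [Set.mem_union, Set.mem_ofPred_eq, not_or, not_lt] at hω hω'
  linarith [norm_add_le (X ω) (Y ω)]

lemma measureReal_norm_gt_le (X Y : Ω → E) {a b r : ℝ} (h : r + b ≤ a) :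
    μ.real {ω | a < ‖X ω‖} ≤ μ.real {ω | r < ‖X ω + Y ω‖} + μ.real {ω | b < ‖Y ω‖} := by
  simpa using measureReal_norm_add_gt_le μ (fun ω => X ω + Y ω) (fun ω => -Y ω) h

lemma tendsto_rpow_mul_measureReal_norm_add_gt {X Y : Ω → E} {γ L : ℝ}
    (hX : Tendsto (fun r => r ^ γ * μ.real {ω | r < ‖X ω‖}) atTop (𝓝 L))
    (hY : ∀ b > 0, Tendsto (fun r => r ^ γ * μ.real {ω | b * r < ‖Y ω‖}) atTop (𝓝 0)) :
    Tendsto (fun r => r ^ γ * μ.real {ω | r < ‖X ω + Y ω‖}) atTop (𝓝 L) := by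
  have hscale : Tendsto (fun c : ℝ => c ^ (-γ) * L) (𝓝 1) (𝓝 L) := by
    simpa using ((continuousAt_id.rpow_const (Or.inl one_ne_zero)).mul_const L).tendsto
  have hXc : ∀ c > 0,
      Tendsto (fun r => r ^ γ * μ.real {ω | c * r < ‖X ω‖}) atTop (𝓝 (c ^ (-γ) * L)) :=
    fun c hc => tendsto_rpow_mul_comp_const_mul (f := fun r => μ.real {ω | r < ‖X ω‖}) hX hc
  refine tendsto_order.2 ⟨fun l hl => ?_, fun u hu => ?_⟩
  · obtain ⟨c, hlc, hc1 : 1 < c⟩ :=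
      (((hscale.mono_left nhdsWithin_le_nhds).eventually_const_lt hl).and
        self_mem_nhdsWithin).exists (f := 𝓝[>] (1 : ℝ))
    have hlim := (hXc c (by linarith)).sub (hY (c - 1) (by linarith))
    rw [sub_zero] at hlim
    filter_upwards [hlim.eventually_const_lt hlc, eventually_ge_atTop 0] with r hr hr0
    have := mul_le_mul_of_nonneg_left
      (measureReal_norm_gt_le μ X Y (a := c * r) (b := (c - 1) * r) (r := r) (by linarith))
      (rpow_nonneg hr0 γ)
    linarith
  · obtain ⟨c, hcu, hc⟩ :=
      (((hscale.mono_left nhdsWithin_le_nhds).eventually_lt_const hu).and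
        (Ioo_mem_nhdsLT zero_lt_one)).exists (f := 𝓝[<] (1 : ℝ))
    have hlim := (hXc c hc.1).add (hY (1 - c) (by linarith [hc.2]))
    rw [add_zero] at hlim
    filter_upwards [hlim.eventually_lt_const hcu, eventually_ge_atTop 0] with r hr hr0
    have := mul_le_mul_of_nonneg_left
      (measureReal_norm_add_gt_le μ X Y (a := c * r) (b := (1 - c) * r) (r := r) (by linarith))
      (rpow_nonneg hr0 γ)
    linarith

end NormTail

lemma measureReal_norm_smul_gt {Ω E : Type*} [MeasurableSpace Ω] [MeasurableSpace E]
    [NormedAddCommGroup E] [NormedSpace ℝ E] [OpensMeasurableSpace E] (μ : Measure Ω)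
    {Z : Ω → E} (hZ : Measurable Z) {c : ℝ} (hc : 0 < c) (s : ℝ) :
    μ.real {ω | s < ‖c • Z ω‖} = (μ.map Z).real {x | s / c < ‖x‖} := by
  rw [map_measureReal_apply hZ (measurableSet_lt measurable_const measurable_norm)]
  congr 1
  ext ω
  simp only [Set.mem_ofPred_eq, Set.mem_preimage, norm_smul, Real.norm_of_nonneg hc.le,
    div_lt_iff₀' hc]

theorem gaussian_smoothing_preserves_tail_general
    (d : ℕ) (Ω : Type) [MeasurableSpace Ω] (μ : Measure Ω) [IsProbabilityMeasure μ]
    (X Z : Ω → EuclideanSpace ℝ (Fin d))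
    (hZmeas : Measurable Z)
    (hZlaw : Measure.map Z μ = gaussianMeasure d 0 1)
    (γ : ℝ)
    (htail : Tendsto (fun r : ℝ => r ^ γ * (μ {ω | r < ‖X ω‖}).toReal) atTop (nhds 1))
    (t : ℝ) (ht : 0 < t) :
    Tendsto (fun r : ℝ => r ^ γ * (μ {ω | r < ‖X ω + Real.sqrt t • Z ω‖}).toReal)
      atTop (nhds 1) := by
  have hsqrt : 0 < Real.sqrt t := Real.sqrt_pos.2 ht
  refine tendsto_rpow_mul_measureReal_norm_add_gt μ htail fun b hb => ?_
  refine (tendsto_rpow_mul_gaussianMeasure_real_norm_gt d γ (div_pos hb hsqrt)).congr fun r => ?_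
  rw [measureReal_norm_smul_gt μ hZmeas hsqrt, hZlaw, div_mul_eq_mul_div]

/-- **Gaussian smoothing preserves polynomial tail behavior.**
If `‖X‖` has polynomial tail of index `γ > 0`, i.e. `r^γ P(‖X‖ > r) → 1` as `r → ∞`,
`Z` is a standard Gaussian vector independent of `X`, and `t > 0`, then the
Gaussian-smoothed vector `X_t = X + √t Z` satisfies `r^γ P(‖X_t‖ > r) → 1`. -/
theorem gaussian_smoothing_preserves_tail
    (d : ℕ) (Ω : Type) [MeasurableSpace Ω] (μ : Measure Ω) [IsProbabilityMeasure μ]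
    (X Z : Ω → EuclideanSpace ℝ (Fin d))
    (hXmeas : Measurable X) (hZmeas : Measurable Z)
    (hindep : IndepFun X Z μ)
    (hZlaw : Measure.map Z μ = gaussianMeasure d 0 1)
    (γ : ℝ) (hγ : 0 < γ)
    (htail : Tendsto (fun r : ℝ => r ^ γ * (μ {ω | r < ‖X ω‖}).toReal) atTop (nhds 1))
    (t : ℝ) (ht : 0 < t) :
    Tendsto (fun r : ℝ => r ^ γ * (μ {ω | r < ‖X ω + Real.sqrt t • Z ω‖}).toReal)
      atTop (nhds 1) :=
  gaussian_smoothing_preserves_tail_general d Ω μ X Z hZmeas hZlaw γ htail t ht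
end
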